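/- Parity cancellation identity (key step in the proof of Proposition 2.1): Let b^{(1)}, …, b^{(n)} and c^{(1)}, …, c^{(n)} be complex matrices with b^{(r)}, c^{(r)} of size d_r × d_r, and set u := b^{(1)} ⊗ ⋯ ⊗ b^{(n)} and v := c^{(1)} ⊗ ⋯ ⊗ c^{(n)}. For each subset S ⊆ {1,…,n} let T_S := X^{(1)} ⊗ ⋯ ⊗ X^{(n)}, where X^{(r)} = [b^{(r)}, c^{(r)}] if r ∈ S and X^{(r)} = {b^{(r)}, c^{(r)}} if r ∉ S. Then uv + vu = 2^{1−n} ∑_{S ⊆ {1,…,n}, |S| even} T_S; that is, all odd-parity terms cancel. -/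

import Mathlib

open scoped BigOperators ComplexOrder

namespace Parity

variable {n : ℕ} {d : Fin n → ℕ}

/-- Kronecker product of `n` matrices, as a matrix over the product index set. -/
def kron (a : ∀ r : Fin n, Matrix (Fin (d r)) (Fin (d r)) ℂ) :
    Matrix (∀ r, Fin (d r)) (∀ r, Fin (d r)) ℂ :=
  fun i j => ∏ r, a r (i r) (j r)

/-- The ℓ²-operator norm of a complex matrix. -/
noncomputable def opNorm {I : Type*} [Fintype I] [DecidableEq I] (A : Matrix I I ℂ) : ℝ :=
  ‖Matrix.toEuclideanCLM (𝕜 := ℂ) A‖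

/-- The defect weight φ⁽ⁿ⁾ᵢⱼ. -/
noncomputable def phi {m : ℕ} (a : ∀ r : Fin n, Fin m → Matrix (Fin (d r)) (Fin (d r)) ℂ)
    (i j : Fin m) : ℝ :=
  (2 : ℝ) ^ ((1 : ℤ) - n) *
    ∑ S ∈ Finset.univ.filter (fun S : Finset (Fin n) => Even S.card),
      (∏ r ∈ S, opNorm (a r i * a r j - a r j * a r i)) *
        (∏ r ∈ Sᶜ, opNorm (a r i * a r j + a r j * a r i))

/-- A state: positive semidefinite with trace one. -/
def IsState {I : Type*} [Fintype I] (ρ : Matrix I I ℂ) : Prop :=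
  ρ.PosSemidef ∧ ρ.trace = 1

/-- The trace norm `Tr √(AᴴA)`. -/
noncomputable def traceNorm {I : Type*} [Fintype I] [DecidableEq I] (A : Matrix I I ℂ) : ℝ :=
  (((Matrix.posSemidef_conjTranspose_mul_self A).1.eigenvectorUnitary : Matrix I I ℂ) *
      Matrix.diagonal (fun i => ((Real.sqrt
        ((Matrix.posSemidef_conjTranspose_mul_self A).1.eigenvalues i) : ℝ) : ℂ)) *
      (star (Matrix.posSemidef_conjTranspose_mul_self A).1.eigenvectorUnitary :
        Matrix I I ℂ)).trace.re

/-- Logarithm of a Hermitian matrix via the functional calculus (junk value otherwise);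
an eigenvalue `0` contributes `Real.log 0 = 0`. -/
noncomputable def mlog {I : Type*} [Fintype I] [DecidableEq I] (A : Matrix I I ℂ) :
    Matrix I I ℂ :=
  if hA : A.IsHermitian then
    (hA.eigenvectorUnitary : Matrix I I ℂ) *
      Matrix.diagonal (fun i => (Real.log (hA.eigenvalues i) : ℂ)) *
      (star hA.eigenvectorUnitary : Matrix I I ℂ)
  else 0

/-- Quantum relative entropy `D(ρ‖σ) = Tr(ρ (log ρ − log σ))` (natural logarithm). -/
noncomputable def relEntropy {I : Type*} [Fintype I] [DecidableEq I] (ρ σ : Matrix I I ℂ) : ℝ :=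
  (Matrix.trace (ρ * (mlog ρ - mlog σ))).re

/-- The `r`-th marginal (partial trace over all other factors). -/
noncomputable def marginal (ρ : Matrix (∀ r, Fin (d r)) (∀ r, Fin (d r)) ℂ) (r : Fin n) :
    Matrix (Fin (d r)) (Fin (d r)) ℂ :=
  fun a b => ∑ k : ∀ s, Fin (d s), if k r = a then ρ k (Function.update k r b) else 0

/-- Total correlation `I_tot(ρ) = D(ρ‖ρ₁ ⊗ ⋯ ⊗ ρₙ)`. -/
noncomputable def Itot (ρ : Matrix (∀ r, Fin (d r)) (∀ r, Fin (d r)) ℂ) : ℝ :=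
  relEntropy ρ (kron (fun r => marginal ρ r))

/-- The set of product states. -/
def ProdStates (d : Fin n → ℕ) : Set (Matrix (∀ r, Fin (d r)) (∀ r, Fin (d r)) ℂ) :=
  {σ | ∃ s : ∀ r : Fin n, Matrix (Fin (d r)) (Fin (d r)) ℂ,
    (∀ r, IsState (s r)) ∧ σ = kron s}

/-- The product threshold `Γ_prod(B)`. -/
noncomputable def Gamma (d : Fin n → ℕ) (B : Matrix (∀ r, Fin (d r)) (∀ r, Fin (d r)) ℂ) : ℝ :=
  sSup {x : ℝ | ∃ σ ∈ ProdStates d, x = (Matrix.trace (σ * B)).re}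

/-- The excess `Δ_B(ρ)`. -/
noncomputable def excess (d : Fin n → ℕ) (B ρ : Matrix (∀ r, Fin (d r)) (∀ r, Fin (d r)) ℂ) : ℝ :=
  max ((Matrix.trace (ρ * B)).re - Gamma d B) 0

end Parity

/-!
Since the Kronecker product is multiplicative, the identity holds entrywise as soon as
`∏ p + ∏ q = 2 ^ (1 - n) ∑_{|S| even} ∏_{r ∈ S} (p r - q r) ∏_{r ∉ S} (p r + q r)` for scalars,
where `p r`, `q r` are the entries of `b r * c r` and `c r * b r`. Put `x = p + q`, `y = p - q`,
so that `2p = x + y` and `2q = x - y`. Expanding `∏ (x + y)` and `∏ (x - y)` over subsets `S`, the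
terms of the second carry the sign `(-1) ^ |S|`, so in their sum the odd `S` cancel and the even
`S` appear twice.
-/

open Finset

section ParityExpansion

variable {ι : Type*} [Fintype ι] [DecidableEq ι]

theorem prod_ite_mem_eq_prod_mul_prod_compl {M : Type*} [CommMonoid M] (S : Finset ι)
    (f g : ι → M) :
    ∏ i, (if i ∈ S then f i else g i) = (∏ i ∈ S, f i) * ∏ i ∈ Sᶜ, g i := by
  rw [prod_ite, filter_mem_eq_inter, univ_inter, filter_not, filter_mem_eq_inter, univ_inter,
    compl_eq_univ_sdiff]

theorem prod_add_eq_sum_prod_ite {R : Type*} [CommSemiring R] (x y : ι → R) :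
    ∏ i, (x i + y i) = ∑ S : Finset ι, ∏ i, if i ∈ S then y i else x i := by
  simp only [add_comm (x _), Fintype.prod_add, prod_ite_mem_eq_prod_mul_prod_compl]

theorem prod_add_add_prod_sub {R : Type*} [CommRing R] (x y : ι → R) :
    ∏ i, (x i + y i) + ∏ i, (x i - y i) =
      2 * ∑ S ∈ univ.filter (fun S : Finset ι => Even S.card),
        ∏ i, if i ∈ S then y i else x i := by
  have sign (S : Finset ι) : (∏ i, if i ∈ S then -y i else x i) =
      (-1) ^ S.card * ∏ i, if i ∈ S then y i else x i := by
    simp only [prod_ite_mem_eq_prod_mul_prod_compl, neg_eq_neg_one_mul (y _), prod_mul_distrib,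
      prod_const]
    ring
  simp only [sub_eq_add_neg, prod_add_eq_sum_prod_ite, sign, ← sum_add_distrib, sum_filter,
    mul_sum]
  refine sum_congr rfl fun S _ => ?_
  rcases Nat.even_or_odd S.card with h | h
  · rw [if_pos h, h.neg_one_pow]; ring
  · rw [if_neg (Nat.not_even_iff_odd.mpr h), h.neg_one_pow]; ring

theorem prod_add_prod_eq_two_zpow_mul_sum_even {K : Type*} [Field K] (h2 : (2 : K) ≠ 0)
    (p q : ι → K) :
    ∏ i, p i + ∏ i, q i =
      (2 : K) ^ ((1 : ℤ) - Fintype.card ι) *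
        ∑ S ∈ univ.filter (fun S : Finset ι => Even S.card),
          ∏ i, if i ∈ S then p i - q i else p i + q i := by
  have key := prod_add_add_prod_sub (fun i => p i + q i) (fun i => p i - q i)
  simp only [add_add_sub_cancel, add_sub_sub_cancel, ← two_mul, prod_mul_distrib, prod_const,
    card_univ, ← mul_add] at key
  rw [zpow_sub₀ h2, zpow_one, zpow_natCast, div_eq_inv_mul, mul_assoc, ← key,
    inv_mul_cancel_left₀ (pow_ne_zero _ h2)]

end ParityExpansion

namespace Parity

variable {n : ℕ} {d : Fin n → ℕ}

theorem kron_mul (a b : ∀ r, Matrix (Fin (d r)) (Fin (d r)) ℂ) :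
    kron a * kron b = kron (fun r => a r * b r) := by
  ext i j
  simp only [Matrix.mul_apply, kron, Fintype.prod_sum, prod_mul_distrib]

end Parity

open Parity in
theorem parity_cancellation_general
    {n : ℕ} {d : Fin n → ℕ}
    (b c : ∀ r : Fin n, Matrix (Fin (d r)) (Fin (d r)) ℂ) :
    kron b * kron c + kron c * kron b =
      ((2 : ℂ) ^ ((1 : ℤ) - n)) •
        ∑ S ∈ Finset.univ.filter (fun S : Finset (Fin n) => Even S.card),
          kron (fun r =>
            if r ∈ S then b r * c r - c r * b r else b r * c r + c r * b r) := by
  rw [kron_mul, kron_mul]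
  ext i j
  simp only [Matrix.add_apply, Matrix.smul_apply, Matrix.sum_apply, kron, smul_eq_mul,
    apply_ite (fun M : Matrix _ _ ℂ => M (i _) (j _)), Matrix.sub_apply]
  simpa using prod_add_prod_eq_two_zpow_mul_sum_even two_ne_zero
    (fun r => (b r * c r) (i r) (j r)) (fun r => (c r * b r) (i r) (j r))

open Parity in
/-- Parity cancellation identity: the odd-parity terms in `uv + vu` cancel. -/
theorem parity_cancellation
    {n : ℕ} {d : Fin n → ℕ} (hn : 1 ≤ n) (hd : ∀ r, 1 ≤ d r)
    (b c : ∀ r : Fin n, Matrix (Fin (d r)) (Fin (d r)) ℂ) :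
    kron b * kron c + kron c * kron b =
      ((2 : ℂ) ^ ((1 : ℤ) - n)) •
        ∑ S ∈ Finset.univ.filter (fun S : Finset (Fin n) => Even S.card),
          kron (fun r =>
            if r ∈ S then b r * c r - c r * b r else b r * c r + c r * b r) :=
  parity_cancellation_general b c
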